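/- arXiv:2604.02953 — 5 statements merged into one kernel-verified Lean document; each statement's English description precedes it below -/
import Mathlib

section
/- For all natural numbers M and k with k < M and every real β with 0 < β < 1, the binomial tail inversion equals the beta inverse CDF at confidence 1−β with shifted parameters: sSup {e ∈ [0,1] : ∑_{j=0}^{k} C(M,j)·e^j·(1−e)^{M−j} ≥ β} = sSup {e ∈ [0,1] : (1/B(k+1, M−k))·∫_0^e t^k·(1−t)^{M−k−1} dt ≤ 1−β}. -/
open scoped BigOperators

/-- The binomial CDF: `Bin_cdf(k, M, e) = ∑_{j=0}^{k} C(M,j)·e^j·(1−e)^{M−j}`. -/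
noncomputable def binCdf (k M : ℕ) (e : ℝ) : ℝ :=
  ∑ j ∈ Finset.range (k + 1), (M.choose j : ℝ) * e ^ j * (1 - e) ^ (M - j)

/-- The beta CDF with parameters `a = k+1`, `b = M-k` (given as natural-number data,
so the integrand is `t^k (1-t)^(M-k-1)`), normalized by the Beta function
`B(k+1, M-k) = ∫_0^1 t^k (1-t)^(M-k-1) dt`. -/
noncomputable def betaCdfShift (k M : ℕ) (e : ℝ) : ℝ :=
  (1 / ∫ t in (0:ℝ)..1, t ^ k * (1 - t) ^ (M - k - 1)) *
    ∫ t in (0:ℝ)..e, t ^ k * (1 - t) ^ (M - k - 1)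

/-- The binomial tail inversion `Bin̄(k, M, β)`. -/
noncomputable def binInv (k M : ℕ) (β : ℝ) : ℝ :=
  sSup {e : ℝ | e ∈ Set.Icc (0:ℝ) 1 ∧ β ≤ binCdf k M e}

/-- The beta inverse CDF `Betā(k+1, M-k, β)` (with parameters `a = k+1`, `b = M-k`). -/
noncomputable def betaInvShift (k M : ℕ) (β : ℝ) : ℝ :=
  sSup {e : ℝ | e ∈ Set.Icc (0:ℝ) 1 ∧ betaCdfShift k M e ≤ β}


lemma term_hasDerivAt (M j : ℕ) (e : ℝ) :
    HasDerivAt (fun x : ℝ => (M.choose j : ℝ) * x ^ j * (1 - x) ^ (M - j))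
      ((M.choose j : ℝ) * (j * e ^ (j - 1)) * (1 - e) ^ (M - j)
        - (M.choose j : ℝ) * e ^ j * (((M - j : ℕ) : ℝ) * (1 - e) ^ (M - j - 1))) e := by
  have h1 : HasDerivAt (fun x : ℝ => (M.choose j : ℝ) * x ^ j)
      ((M.choose j : ℝ) * (j * e ^ (j - 1))) e := (hasDerivAt_pow j e).const_mul _
  have h2 : HasDerivAt (fun x : ℝ => (1 - x) ^ (M - j))
      (-(((M - j : ℕ) : ℝ) * (1 - e) ^ (M - j - 1))) e := by
    have := (hasDerivAt_pow (M - j) (1 - e)).comp e ((hasDerivAt_const e (1:ℝ)).sub (hasDerivAt_id e))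
    simpa [Function.comp_def] using this
  have := h1.fun_mul h2
  exact this.congr_deriv (by ring)

lemma sum_telescope (M k : ℕ) (hk : k < M) (e : ℝ) :
    ∑ j ∈ Finset.range (k + 1),
        ((M.choose j : ℝ) * (j * e ^ (j - 1)) * (1 - e) ^ (M - j)
          - (M.choose j : ℝ) * e ^ j * (((M - j : ℕ) : ℝ) * (1 - e) ^ (M - j - 1)))
      = -((M.choose k : ℝ) * ((M - k : ℕ) : ℝ) * e ^ k * (1 - e) ^ (M - k - 1)) := by
  induction k with
  | zero => simp [Finset.sum_range_succ]
  | succ n ih =>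
    have hn : n < M := Nat.lt_of_succ_lt hk
    rw [Finset.sum_range_succ, ih hn]
    have hcast : ((M.choose (n+1) : ℝ) * ((n:ℝ) + 1)) = (M.choose n : ℝ) * ((M - n : ℕ) : ℝ) := by
      rw [← Nat.cast_succ, ← Nat.cast_mul, ← Nat.cast_mul, Nat.choose_succ_right_eq]
    obtain ⟨m, hm⟩ : ∃ m, M - n - 2 = m := ⟨_, rfl⟩
    have e1 : M - (n+1) = m + 1 := by omega
    have e2 : M - (n+1) - 1 = m := by omega
    have e3 : M - n - 1 = m + 1 := by omega
    have e4 : M - n = m + 2 := by omega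
    rw [e4] at hcast
    rw [e2, e1, e3, e4]
    simp only [Nat.add_sub_cancel]
    push_cast at hcast ⊢
    linear_combination e ^ n * (1 - e) ^ (m + 1) * hcast

lemma hasDerivAt_binCdf (M k : ℕ) (hk : k < M) (e : ℝ) :
    HasDerivAt (binCdf k M)
      (-((M.choose k : ℝ) * ((M - k : ℕ) : ℝ) * e ^ k * (1 - e) ^ (M - k - 1))) e := by
  rw [← sum_telescope M k hk e]
  exact HasDerivAt.fun_sum fun j _ => term_hasDerivAt M j e

lemma binCdf_zero (M k : ℕ) : binCdf k M 0 = 1 := by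
  rw [binCdf, Finset.sum_eq_single 0]
  · simp
  · intro j _ hj
    simp [zero_pow hj]
  · intro h
    exact absurd (Finset.mem_range.mpr (Nat.succ_pos k)) h

lemma binCdf_one (M k : ℕ) (hk : k < M) : binCdf k M 1 = 0 := by
  rw [binCdf]
  apply Finset.sum_eq_zero
  intro j hj
  have hj' : j < k + 1 := Finset.mem_range.mp hj
  have : M - j ≠ 0 := by omega
  simp [zero_pow this]

lemma binCdf_eq (M k : ℕ) (hk : k < M) (e : ℝ) :
    binCdf k M e = 1 - ((M.choose k : ℝ) * ((M - k : ℕ) : ℝ)) *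
      ∫ t in (0:ℝ)..e, t ^ k * (1 - t) ^ (M - k - 1) := by
  set c : ℝ := (M.choose k : ℝ) * ((M - k : ℕ) : ℝ) with hc
  have hcont : Continuous fun t : ℝ => (-c) * (t ^ k * (1 - t) ^ (M - k - 1)) := by
    fun_prop
  have hderiv : ∀ t ∈ Set.uIcc (0:ℝ) e,
      HasDerivAt (binCdf k M) ((-c) * (t ^ k * (1 - t) ^ (M - k - 1))) t := by
    intro t _
    have := hasDerivAt_binCdf M k hk t
    convert this using 1
    rw [hc]; ring
  have hint := intervalIntegral.integral_eq_sub_of_hasDerivAt hderiv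
    (hcont.intervalIntegrable 0 e)
  rw [intervalIntegral.integral_const_mul, binCdf_zero] at hint
  linarith [hint]

lemma betaCdfShift_eq (M k : ℕ) (hk : k < M) (e : ℝ) :
    betaCdfShift k M e = 1 - binCdf k M e := by
  set c : ℝ := (M.choose k : ℝ) * ((M - k : ℕ) : ℝ) with hc
  have hc0 : c ≠ 0 := by
    rw [hc]
    have h1 : 0 < M.choose k := Nat.choose_pos hk.le
    have h2 : 0 < M - k := by omega
    positivity
  have hB : (∫ t in (0:ℝ)..1, t ^ k * (1 - t) ^ (M - k - 1)) = 1 / c := by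
    have h1 := binCdf_eq M k hk 1
    rw [binCdf_one M k hk, ← hc] at h1
    have hmul : c * ∫ t in (0:ℝ)..1, t ^ k * (1 - t) ^ (M - k - 1) = 1 := by linarith
    exact eq_one_div_of_mul_eq_one_left (mul_comm c _ ▸ hmul)
  rw [betaCdfShift, hB, binCdf_eq M k hk e, one_div_one_div]
  ring

/-- For `k < M` and `0 < β < 1`, the binomial tail inversion equals the beta inverse
CDF at confidence `1 - β` with shifted parameters `a = k+1`, `b = M-k`. -/
theorem binInv_eq_betaInv (M k : ℕ) (hk : k < M) (β : ℝ) (hβ0 : 0 < β) (hβ1 : β < 1) :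
    binInv k M β = betaInvShift k M (1 - β) := by
  unfold binInv betaInvShift
  congr 1
  ext x
  simp only [Set.mem_setOf_eq, betaCdfShift_eq M k hk]
  constructor
  · rintro ⟨hx, h⟩
    exact ⟨hx, by linarith⟩
  · rintro ⟨hx, h⟩
    exact ⟨hx, by linarith⟩
end

section
/- Fix a natural number M ≥ 1, a real p with 0 ≤ p ≤ 1, and a real β with 0 < β < 1. If K is a random variable distributed according to the binomial distribution with M trials and success probability p, then the probability that p > Betā(K+1, M−K, 1−β) is at most β; that is, ∑_{k ∈ A} C(M,k)·p^k·(1−p)^{M−k} ≤ β, where A = {k < M : p > Betā(k+1, M−k, 1−β)}. -/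
open scoped BigOperators Classical

private lemma contf (k n : ℕ) : Continuous (fun t : ℝ => t ^ k * (1 - t) ^ n) := by
  continuity

/-- key identity: partial binomial sum plus normalized incomplete beta integral equals 1. -/
private lemma key (M k : ℕ) (hk : k < M) (p : ℝ) :
    (∑ j ∈ Finset.range (k+1), (M.choose j : ℝ) * p ^ j * (1 - p) ^ (M - j))
      + ((M - k) * M.choose k : ℕ) * ∫ t in (0:ℝ)..p, t ^ k * (1 - t) ^ (M - k - 1) = 1 := by
  set f : ℝ → ℝ := fun t => t ^ k * (1 - t) ^ (M - k - 1) with hf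
  set G : ℝ → ℝ := fun x =>
    (∑ j ∈ Finset.range (k+1), (M.choose j : ℝ) * x ^ j * (1 - x) ^ (M - j))
      + ((M - k) * M.choose k : ℕ) * ∫ t in (0:ℝ)..x, f t with hG
  set b : ℕ → ℝ → ℝ := fun j x => ((j * M.choose j : ℕ) : ℝ) * x ^ (j-1) * (1 - x) ^ (M - j)
    with hb
  have hco : ∀ j, j < M → ((j+1) * M.choose (j+1) : ℕ) = (M - j) * M.choose j := by
    intro j hj
    rw [Nat.mul_comm, Nat.choose_succ_right_eq, Nat.mul_comm]
  have hGderiv : ∀ x : ℝ, HasDerivAt G 0 x := by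
    intro x
    have hsum : HasDerivAt (fun y => ∑ j ∈ Finset.range (k+1),
        (M.choose j : ℝ) * y ^ j * (1 - y) ^ (M - j))
        (∑ j ∈ Finset.range (k+1), (b j x - b (j+1) x)) x := by
      apply HasDerivAt.fun_sum
      intro j hj
      have hjk : j ≤ k := Nat.lt_succ_iff.mp (Finset.mem_range.mp hj)
      have hjM : j < M := lt_of_le_of_lt hjk hk
      have h1 : HasDerivAt (fun y : ℝ => y ^ j) ((j:ℝ) * x ^ (j-1)) x := hasDerivAt_pow j x
      have h2 : HasDerivAt (fun y : ℝ => (1 - y) ^ (M - j))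
          (((M - j : ℕ):ℝ) * (1 - x) ^ (M - j - 1) * (-1)) x := by
        have : HasDerivAt (fun y : ℝ => 1 - y) (-1) x := by
          exact (hasDerivAt_id x).const_sub 1
        exact this.pow (M - j)
      have h3 := (h1.const_mul ((M.choose j : ℝ))).mul h2
      refine h3.congr_deriv ?_
      have hrw : b (j+1) x = (((M - j) * M.choose j : ℕ) : ℝ) * x ^ j * (1 - x) ^ (M - j - 1) := by
        simp only [hb, hco j hjM]
        rfl
      rw [hrw]
      simp only [hb]
      push_cast
      ring
    have hint : HasDerivAt (fun y => ∫ t in (0:ℝ)..y, f t) (f x) x := by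
      exact ((contf k (M-k-1)).integral_hasStrictDerivAt 0 x).hasDerivAt
    have := hsum.add ((hint.const_mul (((M - k) * M.choose k : ℕ):ℝ)))
    refine this.congr_deriv ?_
    rw [Finset.sum_range_sub' (fun j => b j x)]
    have hb0 : b 0 x = 0 := by simp [hb]
    have hbk : b (k+1) x = (((M - k) * M.choose k : ℕ) : ℝ) * x ^ k * (1 - x) ^ (M - k - 1) := by
      simp only [hb, hco k hk, Nat.add_sub_cancel]
      rfl
    rw [hb0, hbk, hf]
    ring
  have hconst : ∀ x y : ℝ, G x = G y :=
    is_const_of_deriv_eq_zero (fun x => (hGderiv x).differentiableAt)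
      (fun x => (hGderiv x).deriv)
  have hG0 : G 0 = 1 := by
    simp only [hG, intervalIntegral.integral_same, mul_zero, add_zero]
    rw [Finset.sum_eq_single 0]
    · simp
    · intro j hj hj0
      simp [zero_pow hj0]
    · simp
  calc G p = G 0 := hconst p 0
    _ = 1 := hG0

private lemma S_eq (M k : ℕ) (hk : k < M) (p : ℝ) :
    ∑ j ∈ Finset.range (k+1), (M.choose j : ℝ) * p ^ j * (1 - p) ^ (M - j)
      = 1 - betaCdfShift k M p := by
  have h1 := key M k hk 1
  have hS1 : ∑ j ∈ Finset.range (k+1), (M.choose j : ℝ) * (1:ℝ) ^ j * (1 - 1) ^ (M - j) = 0 := by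
    apply Finset.sum_eq_zero; intro j hj
    have hjM : j < M := lt_of_le_of_lt (Nat.lt_succ_iff.mp (Finset.mem_range.mp hj)) hk
    have h0 : M - j ≠ 0 := Nat.sub_ne_zero_of_lt hjM
    simp [h0]
  rw [hS1, zero_add] at h1
  have hc : (((M - k) * M.choose k : ℕ) : ℝ) ≠ 0 := by
    have h1' : 0 < M - k := Nat.sub_pos_of_lt hk
    have h2' : 0 < M.choose k := Nat.choose_pos hk.le
    positivity
  have hI1 : (∫ t in (0:ℝ)..1, t ^ k * (1 - t) ^ (M - k - 1))
      = 1 / (((M - k) * M.choose k : ℕ) : ℝ) := by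
    exact eq_one_div_of_mul_eq_one_left (by linarith [h1])
  have hkey := key M k hk p
  rw [betaCdfShift, hI1]
  rw [one_div_one_div]
  linarith [hkey]

private lemma cdf_gt (M k : ℕ) (hk : k < M) (p : ℝ) (hp0 : 0 ≤ p) (hp1 : p ≤ 1)
    (β : ℝ) (hlt : betaInvShift k M (1 - β) < p) : 1 - β < betaCdfShift k M p := by
  by_contra h
  push_neg at h
  have hmem : p ∈ {e : ℝ | e ∈ Set.Icc (0:ℝ) 1 ∧ betaCdfShift k M e ≤ 1 - β} :=
    ⟨⟨hp0, hp1⟩, h⟩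
  have hbdd : BddAbove {e : ℝ | e ∈ Set.Icc (0:ℝ) 1 ∧ betaCdfShift k M e ≤ 1 - β} :=
    ⟨1, fun x hx => hx.1.2⟩
  have := le_csSup hbdd hmem
  rw [betaInvShift] at hlt
  linarith

/-- Empirical conformal coverage PAC guarantee: if `K ~ Binomial(M, p)`, then the
probability of the event `p > Betā(K+1, M-K, 1-β)` is at most `β`; the probability of
that event is written out as the binomial sum over
`A = {k < M : p > Betā(k+1, M-k, 1-β)}`. -/
theorem empirical_conformal_pac (M : ℕ) (hM : 1 ≤ M) (p : ℝ) (hp0 : 0 ≤ p) (hp1 : p ≤ 1)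
    (β : ℝ) (hβ0 : 0 < β) (hβ1 : β < 1) :
    ∑ k ∈ (Finset.range M).filter (fun k => betaInvShift k M (1 - β) < p),
      (M.choose k : ℝ) * p ^ k * (1 - p) ^ (M - k) ≤ β := by
  set A := (Finset.range M).filter (fun k => betaInvShift k M (1 - β) < p) with hA
  rcases Finset.eq_empty_or_nonempty A with hAe | hAne
  · rw [hAe]; simp; linarith
  · set K := A.max' hAne with hK
    have hKA : K ∈ A := A.max'_mem hAne
    have hKM : K < M := Finset.mem_range.mp (Finset.mem_filter.mp hKA).1
    have hKlt : betaInvShift K M (1 - β) < p := (Finset.mem_filter.mp hKA).2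
    have hsub : A ⊆ Finset.range (K + 1) := by
      intro k hk
      exact Finset.mem_range.mpr (Nat.lt_succ_of_le (Finset.le_max' A k hk))
    have hle : ∑ k ∈ A, (M.choose k : ℝ) * p ^ k * (1 - p) ^ (M - k)
        ≤ ∑ k ∈ Finset.range (K + 1), (M.choose k : ℝ) * p ^ k * (1 - p) ^ (M - k) := by
      apply Finset.sum_le_sum_of_subset_of_nonneg hsub
      intro i _ _
      have : (0:ℝ) ≤ 1 - p := by linarith
      positivity
    have hcdf := cdf_gt M K hKM p hp0 hp1 β hKlt
    have hSeq := S_eq M K hKM p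
    linarith
end

section
/- For all natural numbers M and k with k < M, every real β with 0 < β < 1, and every real p with 0 ≤ p ≤ 1: p > Bin̄(k, M, β) if and only if ∑_{j=0}^{k} C(M,j)·p^j·(1−p)^{M−j} < β. -/
open scoped BigOperators

lemma binCdf_hasDerivAt (M k : ℕ) (hk : k < M) (e : ℝ) :
    HasDerivAt (binCdf k M)
      (-((M : ℝ) * ((M-1).choose k) * e^k * (1-e)^(M-1-k))) e := by
  induction k with
  | zero =>
    have h1 : HasDerivAt (fun x : ℝ => 1 - x) (-1) e := by
      simpa using (hasDerivAt_id e).const_sub (1:ℝ)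
    have h2 : HasDerivAt (fun x : ℝ => (1 - x)^M)
        (((M:ℝ) * (1-e)^(M-1)) * (-1)) e :=
      (hasDerivAt_pow M (1-e)).comp e h1
    have heq : binCdf 0 M = fun x : ℝ => (1 - x)^M := by
      funext x; simp [binCdf]
    rw [heq]
    convert h2 using 1
    simp
  | succ k ih =>
    have hk' : k < M := Nat.lt_of_succ_lt hk
    set m : ℕ := M - (k+1) with hm
    have hm1 : 1 ≤ m := Nat.le_sub_of_add_le (by omega)
    have hMk : M - 1 - k = m := by omega
    have hMk2 : M - 1 - (k+1) = m - 1 := by omega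
    -- derivative of the new term
    have h1 : HasDerivAt (fun x : ℝ => 1 - x) (-1) e := by
      simpa using (hasDerivAt_id e).const_sub (1:ℝ)
    have h2 : HasDerivAt (fun x : ℝ => (1 - x)^m)
        (((m:ℝ) * (1-e)^(m-1)) * (-1)) e :=
      (hasDerivAt_pow m (1-e)).comp e h1
    have h3 : HasDerivAt (fun x : ℝ => x^(k+1)) (((k:ℝ)+1) * e^k) e := by
      simpa using hasDerivAt_pow (k+1) e
    have h4 : HasDerivAt (fun x : ℝ => x^(k+1) * (1-x)^m)
        ((((k:ℝ)+1) * e^k) * (1-e)^m + e^(k+1) * (((m:ℝ) * (1-e)^(m-1)) * (-1))) e :=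
      h3.mul h2
    have h5 := ((ih hk').add ((h4.const_mul ((M.choose (k+1) : ℝ))))) 
    have heq : binCdf (k+1) M =
        fun x : ℝ => binCdf k M x + (M.choose (k+1) : ℝ) * (x^(k+1) * (1-x)^m) := by
      funext x
      simp only [binCdf, Finset.sum_range_succ, ← hm]
      ring
    rw [heq]
    convert h5 using 1
    · rfl
    · rfl
    · rfl
    -- now the算 algebra with binomial identities
    have hM1 : M - 1 + 1 = M := by omega
    have id1 : (M:ℝ) * ((M-1).choose k) = (M.choose (k+1) : ℝ) * ((k:ℝ)+1) := by
      have h := Nat.add_one_mul_choose_eq (M-1) k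
      rw [hM1] at h
      exact_mod_cast congrArg (fun n : ℕ => (n:ℝ)) h
    have id2 : (M.choose (k+1) : ℝ) * (m:ℝ) = (M:ℝ) * ((M-1).choose (k+1)) := by
      have e1 : M.choose (k+2) * (k+2) = M.choose (k+1) * (M - (k+1)) :=
        Nat.choose_succ_right_eq M (k+1)
      have e2 := Nat.add_one_mul_choose_eq (M-1) (k+1)
      rw [hM1] at e2
      have : M.choose (k+1) * m = M * (M-1).choose (k+1) := by
        rw [hm, ← e1, e2]
      exact_mod_cast congrArg (fun n : ℕ => (n:ℝ)) this
    rw [hMk, hMk2]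
    have hpow : (1-e)^m = (1-e)^(m-1) * (1-e) := by
      rw [← pow_succ]; congr 1; omega
    calc -((M:ℝ) * ((M-1).choose (k+1)) * e^(k+1) * (1-e)^(m-1))
        = -((M.choose (k+1):ℝ) * (m:ℝ) * e^(k+1) * (1-e)^(m-1)) := by rw [id2]
      _ = -((M:ℝ) * ((M-1).choose k) * e^k * (1-e)^m)
          + (M.choose (k+1):ℝ) * ((((k:ℝ)+1) * e^k) * (1-e)^m
              + e^(k+1) * (((m:ℝ) * (1-e)^(m-1)) * (-1))) := by
          rw [id1]; ring

lemma binCdf_continuous (M k : ℕ) (hk : k < M) : Continuous (binCdf k M) :=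
  continuous_iff_continuousAt.2 fun e => (binCdf_hasDerivAt M k hk e).continuousAt

lemma binCdf_antitoneOn (M k : ℕ) (hk : k < M) :
    AntitoneOn (binCdf k M) (Set.Icc 0 1) := by
  apply antitoneOn_of_deriv_nonpos (convex_Icc 0 1)
    (binCdf_continuous M k hk).continuousOn
    (fun x _ => (binCdf_hasDerivAt M k hk x).differentiableAt.differentiableWithinAt)
  intro x hx
  rw [interior_Icc] at hx
  rw [(binCdf_hasDerivAt M k hk x).deriv]
  have h1 : (0:ℝ) ≤ x^k := pow_nonneg hx.1.le k
  have h2 : (0:ℝ) ≤ (1-x)^(M-1-k) := pow_nonneg (by linarith [hx.2]) _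
  have : (0:ℝ) ≤ (M : ℝ) * ((M-1).choose k) * x^k * (1-x)^(M-1-k) := by positivity
  linarith

/-- For `k < M`, `0 < β < 1`, and `p ∈ [0,1]`: `p > Bin̄(k, M, β)` iff
`Bin_cdf(k, M, p) < β`. -/
theorem gt_binInv_iff_binCdf_lt (M k : ℕ) (hk : k < M) (β : ℝ) (hβ0 : 0 < β) (hβ1 : β < 1)
    (p : ℝ) (hp0 : 0 ≤ p) (hp1 : p ≤ 1) :
    binInv k M β < p ↔ binCdf k M p < β := by
  set S : Set ℝ := {e : ℝ | e ∈ Set.Icc (0:ℝ) 1 ∧ β ≤ binCdf k M e} with hS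
  have hS0 : (0:ℝ) ∈ S := by
    refine ⟨Set.mem_Icc.2 ⟨le_refl 0, zero_le_one⟩, ?_⟩
    rw [binCdf_zero]; linarith
  have hSne : S.Nonempty := ⟨0, hS0⟩
  have hSbdd : BddAbove S := ⟨1, fun x hx => hx.1.2⟩
  constructor
  · intro h
    by_contra hc
    push_neg at hc
    have hpS : p ∈ S := ⟨Set.mem_Icc.2 ⟨hp0, hp1⟩, hc⟩
    have := le_csSup hSbdd hpS
    rw [binInv] at h
    linarith
  · intro h
    have hp_pos : 0 < p := by
      rcases lt_or_eq_of_le hp0 with h' | h'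
      · exact h'
      · exfalso; rw [← h', binCdf_zero] at h; linarith
    -- find p' < p with binCdf p' < β
    have hcont := (binCdf_continuous M k hk).continuousAt (x := p)
    have hopen : ∀ᶠ x in nhds p, binCdf k M x < β :=
      hcont.eventually_lt_const h
    rcases Metric.eventually_nhds_iff.1 hopen with ⟨δ, hδ, hball⟩
    set p' : ℝ := max (p - δ/2) (p/2) with hp'
    have hp'_lt : p' < p := by
      apply max_lt <;> [linarith; linarith]
    have hp'_pos : 0 < p' := lt_of_lt_of_le (by linarith) (le_max_right _ _)
    have hp'_near : binCdf k M p' < β := by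
      apply hball
      rw [Real.dist_eq, abs_lt]
      constructor
      · have := le_max_left (p - δ/2) (p/2); linarith
      · linarith
    have hub : ∀ e ∈ S, e ≤ p' := by
      intro e he
      by_contra hgt
      push_neg at hgt
      have : binCdf k M e ≤ binCdf k M p' :=
        binCdf_antitoneOn M k hk ⟨hp'_pos.le, le_trans hp'_lt.le hp1⟩
          he.1 hgt.le
      have := he.2
      linarith
    have : binInv k M β ≤ p' := csSup_le hSne hub
    linarith
end

section
/- Let K be a natural number with K ≥ 1, let (Ω, P) be a probability space, and let X_1, …, X_K, X_{K+1} : Ω → ℝ be independent and identically distributed random variables. Let α ∈ (0,1) and set m = ⌈(K+1)(1−α)⌉; assume m ≤ K. Then P( X_{K+1} ≤ X_{(m)} ) ≥ 1 − α, where X_{(m)} denotes the m-th smallest value among X_1, …, X_K (the m-th order statistic of the first K variables). -/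
open MeasureTheory ProbabilityTheory Finset
open scoped ENNReal NNReal BigOperators

/-- The number of entries of `y` strictly below `t`. -/
noncomputable def cnt {n : ℕ} (y : Fin n → ℝ) (t : ℝ) : ℕ :=
  (univ.filter fun i => y i < t).card

lemma cnt_le_iff {n : ℕ} {g : Fin n → ℝ} (hg : Monotone g) (j : Fin n) (t : ℝ) :
    t ≤ g j ↔ cnt g t ≤ (j : ℕ) := by
  constructor
  · intro h
    have hsub : (univ.filter fun i => g i < t) ⊆ Finset.Iio j := by
      intro i hi
      simp only [mem_filter, mem_univ, true_and] at hi
      simp only [Finset.mem_Iio]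
      by_contra hij
      exact absurd (lt_of_lt_of_le hi h) (not_lt.2 (hg (not_lt.1 hij)))
    simpa [cnt, Fin.card_Iio] using Finset.card_le_card hsub
  · intro h
    by_contra ht
    push_neg at ht
    have hsub : Finset.Iic j ⊆ (univ.filter fun i => g i < t) := by
      intro i hi
      simp only [Finset.mem_Iic] at hi
      simp only [mem_filter, mem_univ, true_and]
      exact lt_of_le_of_lt (hg hi) ht
    have h2 := Finset.card_le_card hsub
    rw [Fin.card_Iic] at h2
    unfold cnt at h
    omega

lemma cnt_comp_perm {n : ℕ} (y : Fin n → ℝ) (σ : Equiv.Perm (Fin n)) (t : ℝ) :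
    cnt (y ∘ σ) t = cnt y t := by
  unfold cnt
  apply Finset.card_bij (fun i _ => σ i)
  · intro i hi; simp only [mem_filter, mem_univ, true_and, Function.comp] at *; exact hi
  · intro a _ b _ h; exact σ.injective h
  · intro b hb
    refine ⟨σ.symm b, ?_, by simp⟩
    simp only [mem_filter, mem_univ, true_and, Function.comp, Equiv.apply_symm_apply] at *
    exact hb

lemma le_sorted_iff {n m : ℕ} (f : Fin n → ℝ) (t : ℝ) (hm1 : 1 ≤ m)
    (h : m - 1 < n) :
    t ≤ f (Tuple.sort f ⟨m - 1, h⟩) ↔ cnt f t < m := by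
  have hg := Tuple.monotone_sort f
  have h1 := cnt_le_iff hg ⟨m - 1, h⟩ t
  rw [show (f ∘ Tuple.sort f) ⟨m-1,h⟩ = f (Tuple.sort f ⟨m-1,h⟩) from rfl] at h1
  rw [h1, cnt_comp_perm f (Tuple.sort f) t]
  simp only [Fin.val_mk]
  omega

lemma count_good_ge {n m : ℕ} (y : Fin n → ℝ) (hmn : m ≤ n) (hn : 0 < n) :
    m ≤ (univ.filter fun j => cnt y (y j) < m).card := by
  classical
  set σ := Tuple.sort y with hσ
  have hg := Tuple.monotone_sort y
  have key : ∀ k : ℕ, k < m → cnt y (y (σ ⟨k % n, Nat.mod_lt _ hn⟩)) < m := by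
    intro k hk
    have hkn : k % n = k := Nat.mod_eq_of_lt (lt_of_lt_of_le hk hmn)
    have h1 : cnt (y ∘ σ) ((y ∘ σ) ⟨k % n, Nat.mod_lt _ hn⟩) ≤ k % n :=
      (cnt_le_iff hg _ _).1 le_rfl
    rw [cnt_comp_perm y σ] at h1
    simp only [Function.comp] at h1
    omega
  have hinj : Set.InjOn (fun k : ℕ => σ ⟨k % n, Nat.mod_lt _ hn⟩) (Finset.range m) := by
    intro a ha b hb hab
    simp only [Finset.coe_range, Set.mem_Iio] at ha hb
    have h1 := σ.injective hab
    have ha' : a % n = a := Nat.mod_eq_of_lt (lt_of_lt_of_le ha hmn)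
    have hb' : b % n = b := Nat.mod_eq_of_lt (lt_of_lt_of_le hb hmn)
    simp only [Fin.mk.injEq] at h1
    omega
  have := Finset.card_le_card_of_injOn
    (t := univ.filter fun j => cnt y (y j) < m)
    (fun k : ℕ => σ ⟨k % n, Nat.mod_lt _ hn⟩)
    (fun k hk => by
      simp only [Finset.mem_coe, Finset.mem_range] at hk
      simp only [Finset.mem_coe, mem_filter, mem_univ, true_and]
      exact key k hk) hinj
  simpa using this

lemma cnt_measurableSet {n : ℕ} (j : Fin n) (m : ℕ) :
    MeasurableSet {y : Fin n → ℝ | cnt y (y j) < m} := by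
  have hM : Measurable fun y : Fin n → ℝ => cnt y (y j) := by
    have h : (fun y : Fin n → ℝ => cnt y (y j))
        = fun y => ∑ i, if y i < y j then 1 else 0 := by
      funext y; unfold cnt; rw [Finset.card_filter]
    rw [h]
    exact Finset.measurable_sum _ fun i _ =>
      Measurable.ite (measurableSet_lt (measurable_pi_apply i) (measurable_pi_apply j))
        measurable_const measurable_const
  exact hM ((Set.to_countable (Set.Iio m)).measurableSet)

/-- The `i`-th order statistic (0-indexed: `orderStat n f i` is the `(i+1)`-th smallest
value) of the tuple `f : Fin n → ℝ`, obtained via a sorting permutation. -/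
noncomputable def orderStat (n : ℕ) (f : Fin n → ℝ) (i : Fin n) : ℝ :=
  f (Tuple.sort f i)

/-- Marginal coverage of split conformal prediction: if `X_1, …, X_K, X_{K+1}` are
i.i.d. real random variables, `α ∈ (0,1)`, and `m = ⌈(K+1)(1-α)⌉ ≤ K`, then
`P(X_{K+1} ≤ X_{(m)}) ≥ 1 - α`, where `X_{(m)}` is the `m`-th smallest value among
`X_1, …, X_K`. -/
theorem split_conformal_marginal_coverage
    {Ω : Type*} [MeasurableSpace Ω] (μ : Measure Ω) [IsProbabilityMeasure μ]
    (K : ℕ) (hK : 1 ≤ K) (X : Fin (K + 1) → Ω → ℝ)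
    (hmeas : ∀ i, Measurable (X i))
    (hindep : iIndepFun X μ)
    (hident : ∀ i j, IdentDistrib (X i) (X j) μ μ)
    (α : ℝ) (hα0 : 0 < α) (hα1 : α < 1)
    (m : ℕ) (hm_def : m = ⌈((K : ℝ) + 1) * (1 - α)⌉₊) (hm : m ≤ K) :
    ENNReal.ofReal (1 - α) ≤
      μ {ω | X (Fin.last K) ω ≤
              orderStat K (fun i => X (Fin.castSucc i) ω) ⟨m - 1, by omega⟩} := by
  classical
  have hm1 : 1 ≤ m := by
    rw [hm_def]
    have hpos : (0:ℝ) < ((K:ℝ)+1) * (1-α) := by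
      have : (0:ℝ) < 1 - α := by linarith
      positivity
    exact Nat.ceil_pos.2 hpos
  -- the joint law is a product measure
  have hJ : Measurable fun ω (i : Fin (K+1)) => X i ω := measurable_pi_lambda _ hmeas
  set ν : Measure ℝ := μ.map (X (Fin.last K)) with hν
  haveI hνprob : IsProbabilityMeasure ν :=
    Measure.isProbabilityMeasure_map (hmeas _).aemeasurable
  set π : Measure (Fin (K+1) → ℝ) := Measure.pi (fun _ => ν) with hπ
  haveI hπprob : IsProbabilityMeasure π := by rw [hπ]; infer_instance
  have hmap : μ.map (fun ω i => X i ω) = π := by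
    rw [hπ]
    refine (Measure.pi_eq (μ := fun _ : Fin (K+1) => ν) fun s hs => ?_).symm
    rw [Measure.map_apply hJ (MeasurableSet.univ_pi hs)]
    have hpre : (fun ω (i : Fin (K+1)) => X i ω) ⁻¹' Set.univ.pi s
        = ⋂ i, X i ⁻¹' s i := by
      ext ω; simp [Set.mem_pi]
    rw [hpre, hindep.meas_iInter fun i => ⟨s i, hs i, rfl⟩]
    refine Finset.prod_congr rfl fun i _ => ?_
    rw [← Measure.map_apply (hmeas i) (hs i), (hident i (Fin.last K)).map_eq]
  set S : Fin (K+1) → Set (Fin (K+1) → ℝ) := fun j => {y | cnt y (y j) < m} with hS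
  have hSmeas : ∀ j, MeasurableSet (S j) := fun j => cnt_measurableSet j m
  -- exchangeability
  have hExch : ∀ j, π (S j) = π (S (Fin.last K)) := by
    intro j
    set σ : Equiv.Perm (Fin (K+1)) := Equiv.swap j (Fin.last K) with hσdef
    have hmp : MeasurePreserving (MeasurableEquiv.piCongrLeft (fun _ : Fin (K+1) => ℝ) σ)
        (Measure.pi fun _ => ν) (Measure.pi fun _ => ν) :=
      measurePreserving_piCongrLeft (fun _ : Fin (K+1) => ν) σ
    have hT : ∀ g : Fin (K+1) → ℝ,
        (MeasurableEquiv.piCongrLeft (fun _ => ℝ) σ) g = g ∘ σ.symm := by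
      intro g; funext i
      have h1 : (Equiv.piCongrLeft (fun _ : Fin (K+1) => ℝ) σ) g (σ (σ.symm i))
          = g (σ.symm i) := Equiv.piCongrLeft_apply_apply (fun _ => ℝ) σ g (σ.symm i)
      rw [Equiv.apply_symm_apply] at h1
      exact h1
    have hpre : (MeasurableEquiv.piCongrLeft (fun _ => ℝ) σ) ⁻¹' (S (Fin.last K)) = S j := by
      ext g
      simp only [Set.mem_preimage, hT, hS, Set.mem_setOf_eq]
      have h2 : (g ∘ σ.symm) (Fin.last K) = g j := by
        simp [hσdef, Equiv.symm_swap, Equiv.swap_apply_right]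
      rw [h2, cnt_comp_perm g σ.symm]
    calc π (S j) = π ((MeasurableEquiv.piCongrLeft (fun _ => ℝ) σ) ⁻¹' (S (Fin.last K))) := by
          rw [hpre]
      _ = π (S (Fin.last K)) := by
          rw [hπ]; exact hmp.measure_preimage (hSmeas _).nullMeasurableSet
  -- counting bound
  have hcount : (m : ℝ≥0∞) ≤ ∑ j : Fin (K+1), π (S j) := by
    have hind : ∀ j : Fin (K+1),
        Measurable ((S j).indicator fun _ => (1:ℝ≥0∞)) := fun j =>
      measurable_const.indicator (hSmeas j)
    calc (m : ℝ≥0∞) = ∫⁻ _, (m : ℝ≥0∞) ∂π := by simp [lintegral_const]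
      _ ≤ ∫⁻ y, (∑ j : Fin (K+1), (S j).indicator (fun _ => 1) y) ∂π := by
          apply lintegral_mono
          intro y
          simp only []
          show (m : ℝ≥0∞) ≤ ∑ j : Fin (K+1), (S j).indicator (fun _ => 1) y
          have hsum : ∑ j : Fin (K+1), (S j).indicator (fun _ => (1:ℝ≥0∞)) y
              = ((univ.filter fun j => cnt y (y j) < m).card : ℝ≥0∞) := by
            rw [Finset.card_filter]
            push_cast
            refine Finset.sum_congr rfl fun j _ => ?_
            by_cases h : cnt y (y j) < m
            · simp [Set.indicator_apply, hS, h]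
            · simp [Set.indicator_apply, hS, h]
          rw [hsum]
          exact_mod_cast Nat.cast_le.2 (count_good_ge y (by omega) (by omega))
      _ = ∑ j : Fin (K+1), π (S j) := by
          rw [lintegral_finset_sum _ fun j _ => hind j]
          exact Finset.sum_congr rfl fun j _ => lintegral_indicator_one (hSmeas j)
  have hsum_eq : ∑ j : Fin (K+1), π (S j) = ((K:ℝ≥0∞)+1) * π (S (Fin.last K)) := by
    rw [Finset.sum_congr rfl fun j _ => hExch j, Finset.sum_const, Finset.card_univ,
      Fintype.card_fin, nsmul_eq_mul]
    push_cast
    ring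
  have hmain : (m : ℝ≥0∞) ≤ ((K:ℝ≥0∞)+1) * π (S (Fin.last K)) := hsum_eq ▸ hcount
  -- identify the event
  have hset : {ω | X (Fin.last K) ω ≤
      orderStat K (fun i => X (Fin.castSucc i) ω) ⟨m - 1, by omega⟩}
      = (fun ω (i : Fin (K+1)) => X i ω) ⁻¹' S (Fin.last K) := by
    ext ω
    simp only [Set.mem_setOf_eq, Set.mem_preimage, hS]
    have hcnt : cnt (fun i : Fin K => X (Fin.castSucc i) ω) (X (Fin.last K) ω)
        = cnt (fun i : Fin (K+1) => X i ω) (X (Fin.last K) ω) := by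
      unfold cnt
      rw [Finset.card_filter, Finset.card_filter, Fin.sum_univ_castSucc]
      simp
    have hiff := le_sorted_iff (fun i : Fin K => X (Fin.castSucc i) ω)
      (X (Fin.last K) ω) hm1 (by omega)
    rw [hcnt] at hiff
    exact hiff
  rw [hset, ← Measure.map_apply hJ (hSmeas _), hmap]
  -- final arithmetic
  have hKne : ((K:ℝ≥0∞)+1) ≠ 0 := by simp
  have hKtop : ((K:ℝ≥0∞)+1) ≠ ⊤ := by simp
  rw [← ENNReal.mul_le_mul_iff_right hKne hKtop]
  have hcast : ((K:ℝ≥0∞)+1) = ENNReal.ofReal ((K:ℝ)+1) := by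
    rw [ENNReal.ofReal_add (by positivity) zero_le_one, ENNReal.ofReal_natCast,
      ENNReal.ofReal_one]
  calc ((K:ℝ≥0∞)+1) * ENNReal.ofReal (1-α)
      = ENNReal.ofReal (((K:ℝ)+1) * (1-α)) := by
        rw [hcast, ← ENNReal.ofReal_mul (by positivity)]
    _ ≤ (m : ℝ≥0∞) := by
        rw [← ENNReal.ofReal_natCast m]
        exact ENNReal.ofReal_le_ofReal (by rw [hm_def]; exact Nat.le_ceil _)
    _ ≤ ((K:ℝ≥0∞)+1) * π (S (Fin.last K)) := hmain
end

section
/- Let K be a natural number with K ≥ 1, let (Ω, P) be a probability space, and let X_1, …, X_K : Ω → ℝ be independent and identically distributed random variables whose common cumulative distribution function F is continuous. Then for every natural number m with 1 ≤ m ≤ K and every real x with 0 ≤ x ≤ 1, P( F(X_{(m)}) ≤ x ) = (1/B(m, K+1−m))·∫_0^x t^{m−1}·(1−t)^{K−m} dt, where X_{(m)} denotes the m-th smallest value among X_1, …, X_K; that is, F(X_{(m)}) follows the Beta(m, K+1−m) distribution. -/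
open MeasureTheory ProbabilityTheory Filter
open scoped Classical Topology

lemma count_le_iff {n : ℕ} (h : Fin n → ℝ) (hmono : Monotone h) (i : Fin n) (x : ℝ) :
    h i ≤ x ↔ (i : ℕ) + 1 ≤ (Finset.univ.filter fun j => h j ≤ x).card := by
  constructor
  · intro hx
    have hsub : Finset.Iic i ⊆ Finset.univ.filter fun j => h j ≤ x := by
      intro j hj
      simp only [Finset.mem_filter, Finset.mem_univ, true_and]
      exact le_trans (hmono (Finset.mem_Iic.mp hj)) hx
    calc (i:ℕ) + 1 = (Finset.Iic i).card := (Fin.card_Iic i).symm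
    _ ≤ _ := Finset.card_le_card hsub
  · intro hc
    by_contra hx
    have hsub : (Finset.univ.filter fun j => h j ≤ x) ⊆ Finset.Iio i := by
      intro j hj
      simp only [Finset.mem_filter, Finset.mem_univ, true_and] at hj
      rw [Finset.mem_Iio]
      by_contra hij
      exact hx (le_trans (hmono (not_lt.mp hij)) hj)
    have := Finset.card_le_card hsub
    rw [Fin.card_Iio] at this
    omega

lemma card_filter_perm {n : ℕ} (σ : Equiv.Perm (Fin n)) (p : Fin n → Prop) :
    (Finset.univ.filter fun j => p (σ j)).card = (Finset.univ.filter p).card := by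
  apply Finset.card_bij' (fun j _ => σ j) (fun j _ => σ.symm j)
  · intro a ha; simpa using (Finset.mem_filter.mp ha).2
  · intro a ha
    simp only [Finset.mem_filter, Finset.mem_univ, true_and] at ha ⊢
    simpa using ha
  · intro a _; simp
  · intro a _; simp

lemma orderStat_le_iff {n : ℕ} (f : Fin n → ℝ) (φ : ℝ → ℝ) (hφ : Monotone φ) (i : Fin n) (x : ℝ) :
    φ (orderStat n f i) ≤ x ↔ (i : ℕ) + 1 ≤ (Finset.univ.filter fun j => φ (f j) ≤ x).card := by
  have hmono : Monotone (fun j => φ ((f ∘ Tuple.sort f) j)) := hφ.comp (Tuple.monotone_sort f)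
  have h1 := count_le_iff _ hmono i x
  rw [show φ (orderStat n f i) = φ ((f ∘ Tuple.sort f) i) from rfl, h1]
  have h2 := card_filter_perm (Tuple.sort f) (fun j => φ (f j) ≤ x)
  simp only [Function.comp]
  rw [show (Finset.filter (fun j => φ (f ((Tuple.sort f) j)) ≤ x) Finset.univ).card
      = (Finset.filter (fun j => φ (f j) ≤ x) Finset.univ).card from h2]


lemma pit {Ω : Type*} [MeasurableSpace Ω] (μ : Measure Ω) [IsProbabilityMeasure μ]
    (Y : Ω → ℝ) (hY : Measurable Y) (F : ℝ → ℝ) (hF_cont : Continuous F)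
    (hF : ∀ y, (μ {ω | Y ω ≤ y}).toReal = F y)
    (x : ℝ) (hx0 : 0 ≤ x) (hx1 : x ≤ 1) :
    μ (Y ⁻¹' (F ⁻¹' Set.Iic x)) = ENNReal.ofReal x := by
  set ν : Measure ℝ := μ.map Y with hν
  haveI : IsProbabilityMeasure ν := Measure.isProbabilityMeasure_map hY.aemeasurable
  have hcdf : ∀ y, F y = cdf ν y := by
    intro y
    rw [cdf_eq_real, measureReal_def, hν, Measure.map_apply hY measurableSet_Iic]
    exact (hF y).symm
  have hFmono : Monotone F := by
    intro a b hab
    rw [hcdf a, hcdf b]; exact monotone_cdf _ hab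
  have hFle1 : ∀ y, F y ≤ 1 := by intro y; rw [hcdf y]; exact cdf_le_one ν y
  have hFtop : Tendsto F atTop (𝓝 1) := by
    refine (tendsto_cdf_atTop ν).congr fun y => (hcdf y).symm
  have hFbot : Tendsto F atBot (𝓝 0) := by
    refine (tendsto_cdf_atBot ν).congr fun y => (hcdf y).symm
  set B : Set ℝ := F ⁻¹' Set.Iic x with hB
  have hBmeas : MeasurableSet B := hF_cont.measurable measurableSet_Iic
  have hmap : μ (Y ⁻¹' B) = ν B := (Measure.map_apply hY hBmeas).symm
  rw [hmap]
  by_cases hempty : B = ∅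
  · -- then ∀ y, x < F y, so x ≤ 0, so x = 0
    have hxle : x ≤ 0 := by
      have h2 : ∀ y, x ≤ F y := by
        intro y
        by_contra h
        exact (Set.eq_empty_iff_forall_notMem.mp hempty) y (le_of_not_ge h)
      exact ge_of_tendsto hFbot (Eventually.of_forall h2)
    have : x = 0 := le_antisymm hxle hx0
    simp [hempty, this]
  by_cases huniv : B = Set.univ
  · have hxge : 1 ≤ x := by
      have h2 : ∀ y, F y ≤ x := fun y => (huniv ▸ Set.mem_univ y : y ∈ B)
      exact le_of_tendsto hFtop (Eventually.of_forall h2)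
    have hx : x = 1 := le_antisymm hx1 hxge
    rw [huniv, measure_univ, hx]
    simp
  · obtain ⟨b, hb⟩ := Set.nonempty_iff_ne_empty.mpr hempty
    obtain ⟨z, hz⟩ : ∃ z, z ∉ B := by
      by_contra h
      push_neg at h
      exact huniv (Set.eq_univ_of_forall h)
    have hzx : x < F z := lt_of_not_ge hz
    have hbdd : BddAbove B := by
      refine ⟨z, fun y hy => ?_⟩
      by_contra h
      exact hz (hFmono (le_of_not_ge h) |>.trans hy : F z ≤ x)
    have hclosed : IsClosed B := IsClosed.preimage hF_cont isClosed_Iic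
    set q := sSup B with hq
    have hqB : q ∈ B := hclosed.csSup_mem ⟨b, hb⟩ hbdd
    have hBIic : B = Set.Iic q := by
      ext y
      constructor
      · intro hy; exact le_csSup hbdd hy
      · intro hy; exact le_trans (hFmono hy) hqB
    have hFq : F q = x := by
      refine le_antisymm hqB ?_
      by_contra h
      push_neg at h  -- F q < x
      have hxlt1 : x < 1 := lt_of_lt_of_le hzx (hFle1 z)
      obtain ⟨y, hy⟩ : ∃ y, q < y ∧ x ≤ F y := by
        have := hFtop.eventually (eventually_ge_nhds (by linarith : (x + 1) / 2 < 1))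
        obtain ⟨y0, hy0⟩ := (this.and (eventually_gt_atTop q)).exists
        exact ⟨y0, hy0.2, le_trans (by linarith) hy0.1⟩
      obtain ⟨w, hw, hFw⟩ := intermediate_value_Icc (le_of_lt hy.1)
        (hF_cont.continuousOn) ⟨le_of_lt h, hy.2⟩
      have hwB : w ∈ B := by rw [hB]; simp [hFw]
      have : w ≤ q := le_csSup hbdd hwB
      have : F w ≤ F q := hFmono this
      rw [hFw] at this
      linarith
    have : (ν B).toReal = x := by
      rw [hBIic, ← measureReal_def, ← cdf_eq_real, ← hcdf q, hFq]
    rw [← this, ENNReal.ofReal_toReal (measure_ne_top ν B)]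


lemma meas_count_ge {Ω : Type*} [MeasurableSpace Ω] (μ : Measure Ω) [IsProbabilityMeasure μ]
    (K : ℕ) (X : Fin K → Ω → ℝ) (hmeas : ∀ i, Measurable (X i))
    (hindep : iIndepFun X μ)
    (B : Set ℝ) (hB : MeasurableSet B) (p : ℝ) (hp0 : 0 ≤ p) (hp1 : p ≤ 1)
    (hprob : ∀ i, μ (X i ⁻¹' B) = ENNReal.ofReal p) (m : ℕ) :
    (μ {ω | m ≤ (Finset.univ.filter fun i => X i ω ∈ B).card}).toReal
      = ∑ j ∈ Finset.Icc m K, (K.choose j : ℝ) * (p ^ j * (1 - p) ^ (K - j)) := by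
  have hq0 : (0:ℝ) ≤ 1 - p := by linarith
  -- sets for each selection s
  set C : Finset (Fin K) → Set Ω :=
    fun s => {ω | (Finset.univ.filter fun i => X i ω ∈ B) = s} with hC
  set D : Finset (Fin K) → Fin K → Set ℝ :=
    fun s i => if i ∈ s then B else Bᶜ with hD
  have hCD : ∀ s, C s = ⋂ i, X i ⁻¹' D s i := by
    intro s
    ext ω
    simp only [hC, Set.mem_setOf_eq, Finset.ext_iff, Finset.mem_filter, Finset.mem_univ,
      true_and, Set.mem_iInter, Set.mem_preimage, hD]
    refine forall_congr' fun i => ?_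
    by_cases h : i ∈ s <;> simp [h]
  have hDmeas : ∀ s i, MeasurableSet (D s i) := by
    intro s i
    by_cases h : i ∈ s <;> simp [hD, h, hB, hB.compl]
  have hCmeas : ∀ s, MeasurableSet (C s) := by
    intro s
    rw [hCD]
    exact MeasurableSet.iInter fun i => (hmeas i) (hDmeas s i)
  have hprobc : ∀ i, μ (X i ⁻¹' Bᶜ) = ENNReal.ofReal (1 - p) := by
    intro i
    have : X i ⁻¹' Bᶜ = (X i ⁻¹' B)ᶜ := rfl
    rw [this, measure_compl ((hmeas i) hB) (measure_ne_top μ _), measure_univ, hprob i,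
      ENNReal.ofReal_sub 1 hp0, ENNReal.ofReal_one]
  have hCmeasure : ∀ s : Finset (Fin K),
      μ (C s) = ENNReal.ofReal (p ^ s.card * (1 - p) ^ (K - s.card)) := by
    intro s
    rw [hCD]
    have h1 : μ (⋂ i, X i ⁻¹' D s i) = μ (⋂ i ∈ (Finset.univ : Finset (Fin K)), X i ⁻¹' D s i) := by
      congr 1; simp
    rw [h1, hindep.measure_inter_preimage_eq_mul Finset.univ (fun i _ => hDmeas s i)]
    have h2 : ∀ i, μ (X i ⁻¹' D s i)
        = if i ∈ s then ENNReal.ofReal p else ENNReal.ofReal (1 - p) := by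
      intro i
      by_cases h : i ∈ s
      · simp only [hD, if_pos h, h, if_true, hprob i]
      · simp only [hD, if_neg h, h, if_false, hprobc i]
    calc ∏ i, μ (X i ⁻¹' D s i)
        = ∏ i, (if i ∈ s then ENNReal.ofReal p else ENNReal.ofReal (1 - p)) := by
          exact Finset.prod_congr rfl fun i _ => h2 i
      _ = (∏ i ∈ s, (if i ∈ s then ENNReal.ofReal p else ENNReal.ofReal (1 - p)))
          * ∏ i ∈ sᶜ, (if i ∈ s then ENNReal.ofReal p else ENNReal.ofReal (1 - p)) :=
          (Finset.prod_mul_prod_compl s _).symm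
      _ = ENNReal.ofReal p ^ s.card * ENNReal.ofReal (1 - p) ^ sᶜ.card := by
          rw [Finset.prod_congr rfl (fun i hi => if_pos hi),
            Finset.prod_congr rfl (fun i hi => if_neg (Finset.mem_compl.mp hi)),
            Finset.prod_const, Finset.prod_const]
      _ = ENNReal.ofReal (p ^ s.card * (1 - p) ^ (K - s.card)) := by
          rw [Finset.card_compl, Fintype.card_fin,
            ← ENNReal.ofReal_pow hp0, ← ENNReal.ofReal_pow hq0, ← ENNReal.ofReal_mul (by positivity)]
  -- decompose the event
  set S : Finset (Finset (Fin K)) := Finset.univ.filter fun s => m ≤ s.card with hS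
  have hev : {ω | m ≤ (Finset.univ.filter fun i => X i ω ∈ B).card} = ⋃ s ∈ S, C s := by
    ext ω
    simp only [Set.mem_setOf_eq, Set.mem_iUnion, hS, Finset.mem_filter, Finset.mem_univ, true_and,
      hC]
    constructor
    · intro h
      exact ⟨_, h, rfl⟩
    · rintro ⟨s, hs, rfl⟩
      exact hs
  have hdisj : (S : Set (Finset (Fin K))).PairwiseDisjoint C := by
    intro s _ t _ hst
    refine Set.disjoint_left.mpr fun ω hs ht => hst ?_
    rw [hC] at hs ht
    exact hs.symm.trans ht
  rw [hev, measure_biUnion_finset hdisj fun s _ => hCmeas s]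
  rw [Finset.sum_congr rfl fun s _ => hCmeasure s]
  rw [ENNReal.toReal_sum (by intro s _; exact ENNReal.ofReal_ne_top)]
  rw [Finset.sum_congr rfl fun s _ => ENNReal.toReal_ofReal (by positivity)]
  -- regroup by cardinality
  have hSbU : S = (Finset.Icc m K).biUnion fun j => Finset.powersetCard j Finset.univ := by
    ext s
    simp only [hS, Finset.mem_filter, Finset.mem_univ, true_and, Finset.mem_biUnion,
      Finset.mem_Icc, Finset.mem_powersetCard]
    constructor
    · intro h
      exact ⟨s.card, ⟨h, by simpa using Finset.card_le_univ s⟩, Finset.subset_univ s, rfl⟩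
    · rintro ⟨j, hj, -, rfl⟩
      exact hj.1
  rw [hSbU, Finset.sum_biUnion (by
    intro a _ b _ hab
    refine Finset.disjoint_left.mpr fun s hs ht => hab ?_
    rw [Finset.mem_powersetCard] at hs ht
    rw [← hs.2, ← ht.2])]
  refine Finset.sum_congr rfl fun j hj => ?_
  rw [Finset.sum_congr rfl (fun s hs => by
    rw [(Finset.mem_powersetCard.mp hs).2]), Finset.sum_const,
    Finset.card_powersetCard, Finset.card_fin, nsmul_eq_mul]


lemma beta_binom (K m : ℕ) (hm1 : 1 ≤ m) (hmK : m ≤ K) (y : ℝ) :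
    ∫ t in (0:ℝ)..y, t ^ (m - 1) * (1 - t) ^ (K - m)
      = (1 / ((m : ℝ) * K.choose m)) *
          ∑ j ∈ Finset.Icc m K, (K.choose j : ℝ) * (y ^ j * (1 - y) ^ (K - j)) := by
  set c : ℝ := 1 / ((m : ℝ) * K.choose m) with hc
  set f : ℝ → ℝ := fun t => t ^ (m - 1) * (1 - t) ^ (K - m) with hf
  have hcont : Continuous f := by fun_prop
  set a : ℕ → ℝ → ℝ := fun j u => (K.choose j : ℝ) * j * u ^ (j - 1) * (1 - u) ^ (K - j) with ha
  set H : ℝ → ℝ := fun u => ∑ j ∈ Finset.Icc m K, (K.choose j : ℝ) * (u ^ j * (1 - u) ^ (K - j))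
    with hH
  -- derivative of each binomial term
  have hterm : ∀ (j : ℕ), 1 ≤ j → j ≤ K → ∀ u : ℝ,
      HasDerivAt (fun u : ℝ => (K.choose j : ℝ) * (u ^ j * (1 - u) ^ (K - j)))
        (a j u - a (j + 1) u) u := by
    intro j hj1 hjK u
    have h1 : HasDerivAt (fun u : ℝ => u ^ j) ((j : ℝ) * u ^ (j - 1)) u := hasDerivAt_pow j u
    have h2 : HasDerivAt (fun u : ℝ => (1 - u) ^ (K - j))
        ((((K - j : ℕ) : ℝ) * (1 - u) ^ (K - j - 1)) * (0 - 1)) u := by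
      exact (hasDerivAt_pow (K - j) (1 - u)).comp u
        ((hasDerivAt_const u (1 : ℝ)).sub (hasDerivAt_id u))
    have h3 := (h1.mul h2).const_mul (K.choose j : ℝ)
    refine HasDerivAt.congr_deriv h3 (Eq.symm ?_)
    have hcast : ((K.choose (j + 1) * (j + 1) : ℕ) : ℝ) = ((K.choose j * (K - j) : ℕ) : ℝ) := by
      rw [Nat.choose_succ_right_eq]
    push_cast at hcast
    have hsub : K - (j + 1) = K - j - 1 := by omega
    have hsub2 : j + 1 - 1 = j := by omega
    simp only [ha, hsub, hsub2]
    push_cast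
    linear_combination (-(u ^ j * (1 - u) ^ (K - j - 1))) * hcast
  -- derivative of H
  have hHderiv : ∀ u : ℝ, HasDerivAt H (a m u) u := by
    intro u
    have h1 : HasDerivAt H (∑ j ∈ Finset.Icc m K, (a j u - a (j + 1) u)) u := by
      apply HasDerivAt.fun_sum
      intro j hj
      rw [Finset.mem_Icc] at hj
      exact hterm j (le_trans hm1 hj.1) hj.2 u
    have h2 : ∑ j ∈ Finset.Icc m K, (a j u - a (j + 1) u) = a m u := by
      rw [← Finset.Ico_add_one_right_eq_Icc, Finset.sum_Ico_eq_sum_range]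
      have h3 := Finset.sum_range_sub' (fun i => a (m + i) u) (K + 1 - m)
      simp only [Nat.add_zero, ← Nat.add_assoc] at h3
      rw [h3, show m + (K + 1 - m) = K + 1 by omega]
      have : a (K + 1) u = 0 := by
        simp [ha, Nat.choose_eq_zero_of_lt (Nat.lt_succ_self K)]
      rw [this, sub_zero]
    rw [← h2]; exact h1
  -- derivative of the integral
  have hGderiv : ∀ u : ℝ, HasDerivAt (fun v => ∫ t in (0:ℝ)..v, f t) (f u) u := by
    intro u
    exact intervalIntegral.integral_hasDerivAt_right (hcont.intervalIntegrable 0 u)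
      hcont.aestronglyMeasurable.stronglyMeasurableAtFilter hcont.continuousAt
  have hchoose : (0 : ℝ) < (m : ℝ) * K.choose m := by
    have := Nat.choose_pos hmK
    positivity
  set Φ : ℝ → ℝ := fun u => (∫ t in (0:ℝ)..u, f t) - c * H u with hΦ
  have hΦderiv : ∀ u : ℝ, HasDerivAt Φ 0 u := by
    intro u
    have h := (hGderiv u).sub ((hHderiv u).const_mul c)
    have heq : f u - c * a m u = 0 := by
      simp only [hf, ha, hc]
      have hC : (K.choose m : ℝ) ≠ 0 := Nat.cast_ne_zero.mpr (Nat.choose_pos hmK).ne'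
      field_simp
      ring
    rw [heq] at h
    exact h
  have hΦ0 : Φ y = Φ 0 := by
    apply is_const_of_deriv_eq_zero (fun u => (hΦderiv u).differentiableAt)
    intro u
    exact (hΦderiv u).deriv
  have hH0 : H 0 = 0 := by
    simp only [hH]
    apply Finset.sum_eq_zero
    intro j hj
    rw [Finset.mem_Icc] at hj
    rw [zero_pow (by omega : j ≠ 0)]
    ring
  have hΦ0' : Φ 0 = 0 := by
    simp [hΦ, hH0, intervalIntegral.integral_same]
  have := hΦ0.trans hΦ0'
  simp only [hΦ, sub_eq_zero] at this
  exact this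


/-- If `X_1, …, X_K` are i.i.d. real random variables whose common CDF `F` is
continuous, then for `1 ≤ m ≤ K` the random variable `F(X_{(m)})` follows the
`Beta(m, K+1-m)` distribution: for all `x ∈ [0,1]`,
`P(F(X_{(m)}) ≤ x) = (1/B(m, K+1-m)) ∫_0^x t^(m-1) (1-t)^(K-m) dt`. -/
theorem cdf_orderStat_beta_distributed
    {Ω : Type*} [MeasurableSpace Ω] (μ : Measure Ω) [IsProbabilityMeasure μ]
    (K : ℕ) (hK : 1 ≤ K) (X : Fin K → Ω → ℝ)
    (hmeas : ∀ i, Measurable (X i))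
    (hindep : iIndepFun X μ)
    (hident : ∀ i j, IdentDistrib (X i) (X j) μ μ)
    (F : ℝ → ℝ) (hF_cont : Continuous F)
    (hF_cdf : ∀ i (x : ℝ), (μ {ω | X i ω ≤ x}).toReal = F x)
    (m : ℕ) (hm1 : 1 ≤ m) (hmK : m ≤ K)
    (x : ℝ) (hx0 : 0 ≤ x) (hx1 : x ≤ 1) :
    (μ {ω | F (orderStat K (fun i => X i ω) ⟨m - 1, by omega⟩) ≤ x}).toReal =
      (1 / ∫ t in (0:ℝ)..1, t ^ (m - 1) * (1 - t) ^ (K - m)) *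
        ∫ t in (0:ℝ)..x, t ^ (m - 1) * (1 - t) ^ (K - m) := by
  have i0 : Fin K := ⟨0, hK⟩
  have hFmono : Monotone F := by
    intro a b hab
    rw [← hF_cdf i0 a, ← hF_cdf i0 b]
    exact ENNReal.toReal_mono (measure_ne_top μ _)
      (measure_mono fun ω h => le_trans h hab)
  set B : Set ℝ := F ⁻¹' Set.Iic x with hB
  have hBmeas : MeasurableSet B := hF_cont.measurable measurableSet_Iic
  have hprob : ∀ i, μ (X i ⁻¹' B) = ENNReal.ofReal x := fun i =>
    pit μ (X i) (hmeas i) F hF_cont (fun y => hF_cdf i y) x hx0 hx1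
  -- rewrite the event via order-statistic combinatorics
  have hev : {ω | F (orderStat K (fun i => X i ω) ⟨m - 1, by omega⟩) ≤ x}
      = {ω | m ≤ (Finset.univ.filter fun i => X i ω ∈ B).card} := by
    ext ω
    simp only [Set.mem_setOf_eq]
    rw [orderStat_le_iff (fun i => X i ω) F hFmono ⟨m - 1, by omega⟩ x]
    have h1 : ((⟨m - 1, by omega⟩ : Fin K) : ℕ) + 1 = m := by
      simp only []
      omega
    rw [h1]
    have h2 : (Finset.univ.filter fun j => F ((fun i => X i ω) j) ≤ x)
        = (Finset.univ.filter fun i => X i ω ∈ B) := by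
      apply Finset.filter_congr
      intro j _
      simp [hB, Set.mem_preimage, Set.mem_Iic]
    rw [h2]
  rw [hev, meas_count_ge μ K X hmeas hindep B hBmeas x hx0 hx1 hprob m]
  -- the Beta integral identity
  have hH1 : ∑ j ∈ Finset.Icc m K, (K.choose j : ℝ) * ((1:ℝ) ^ j * (1 - 1) ^ (K - j)) = 1 := by
    rw [Finset.sum_eq_single K]
    · simp
    · intro j hj hjne
      rw [Finset.mem_Icc] at hj
      rw [sub_self, zero_pow (by omega : K - j ≠ 0)]
      ring
    · intro h
      exact absurd (Finset.mem_Icc.mpr ⟨hmK, le_refl K⟩) h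
  have hcne : (1 / ((m : ℝ) * K.choose m)) ≠ 0 := by
    have h1 := Nat.choose_pos hmK
    have h2 : (0:ℝ) < (m : ℝ) * K.choose m := by positivity
    positivity
  rw [beta_binom K m hm1 hmK 1, beta_binom K m hm1 hmK x, hH1, mul_one, one_div,
    inv_mul_cancel_left₀ hcne]
end
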